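/- arXiv:0710.0173 — 3 statements merged into one kernel-verified Lean document; each statement's English description precedes it below -/
import Mathlib

section
/- For any E-GCM graph (Γ,M) (not necessarily connected) and any position λ, if some game sequence from λ diverges (is infinite), then every game sequence from λ diverges. -/
/-- An E-generalized Cartan matrix (E-GCM) on a finite index type `ι`. -/
structure EGCM (ι : Type*) [Fintype ι] where
  /-- the matrix of amplitudes -/
  M : ι → ι → ℝ
  diag : ∀ i, M i i = 2
  offDiag_nonpos : ∀ i j, i ≠ j → M i j ≤ 0
  zero_iff : ∀ i j, M i j = 0 ↔ M j i = 0
  prod_cond : ∀ i j, i ≠ j → M i j * M j i ≠ 0 →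
    4 ≤ M i j * M j i ∨
      ∃ k : ℕ, 3 ≤ k ∧ M i j * M j i = 4 * Real.cos (Real.pi / k) ^ 2

namespace EGCM

variable {ι : Type*} [Fintype ι]

/-- Adjacency in the E-GCM graph. -/
def Adj (E : EGCM ι) (i j : ι) : Prop := i ≠ j ∧ E.M i j ≠ 0

/-- The underlying simple graph of an E-GCM graph. -/
def graph (E : EGCM ι) : SimpleGraph ι where
  Adj i j := i ≠ j ∧ E.M i j ≠ 0
  symm := by
    constructor
    intro i j ⟨h1, h2⟩
    exact ⟨h1.symm, fun hz => h2 ((E.zero_iff j i).mp hz)⟩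
  loopless := by constructor; intro i ⟨h, _⟩; exact h rfl

/-- The result of firing node `i` from position `lam`. -/
def fire (E : EGCM ι) (lam : ι → ℝ) (i : ι) : ι → ℝ := fun j => lam j - E.M i j * lam i

/-- The position resulting from firing the nodes in the list `s` in order. -/
def fireList (E : EGCM ι) (lam : ι → ℝ) : List ι → (ι → ℝ)
  | [] => lam
  | i :: s => fireList E (E.fire lam i) s

/-- The firing sequence `s` is legal from position `lam`: at each step the
fired node carries a positive number. -/
def Legal (E : EGCM ι) (lam : ι → ℝ) : List ι → Prop
  | [] => True
  | i :: s => 0 < lam i ∧ Legal E (E.fire lam i) s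

/-- A position with no positive entries. -/
def Terminal (lam : ι → ℝ) : Prop := ∀ i, lam i ≤ 0

/-- `s` is a (convergent) game sequence from `lam`: a legal firing sequence whose
resulting position has no positive entries. -/
def IsGameSeq (E : EGCM ι) (lam : ι → ℝ) (s : List ι) : Prop :=
  E.Legal lam s ∧ Terminal (E.fireList lam s)

/-- The position after `k` steps of the infinite firing sequence `f`. -/
def posAt (E : EGCM ι) (lam : ι → ℝ) (f : ℕ → ι) : ℕ → (ι → ℝ)
  | 0 => lam
  | k + 1 => E.fire (posAt E lam f k) (f k)

/-- `f` is a divergent game sequence from `lam`: an infinite sequence of legal firings. -/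
def DivergentSeq (E : EGCM ι) (lam : ι → ℝ) (f : ℕ → ι) : Prop :=
  ∀ k, 0 < E.posAt lam f k (f k)

/-- A dominant position: all numbers nonnegative. -/
def Dominant (lam : ι → ℝ) : Prop := ∀ i, 0 ≤ lam i

/-- A strongly dominant position: all numbers positive. -/
def StronglyDominant (lam : ι → ℝ) : Prop := ∀ i, 0 < lam i

/-- The E-GCM graph is admissible if some nonzero dominant position has a
convergent game sequence. -/
def Admissible (E : EGCM ι) : Prop :=
  ∃ lam : ι → ℝ, Dominant lam ∧ lam ≠ 0 ∧ ∃ s : List ι, E.IsGameSeq lam s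

/-- The E-GCM graph is strongly admissible if every nonzero dominant position has a
convergent game sequence. -/
def StronglyAdmissible (E : EGCM ι) : Prop :=
  ∀ lam : ι → ℝ, Dominant lam → lam ≠ 0 → ∃ s : List ι, E.IsGameSeq lam s

/-- A position is adjacency-free if no position reachable from it by a legal firing
sequence (i.e. no intermediate position of a game sequence) has positive numbers at
two adjacent nodes. -/
def AdjacencyFree (E : EGCM ι) (lam : ι → ℝ) : Prop :=
  ∀ s : List ι, E.Legal lam s →
    ¬ ∃ i j, E.Adj i j ∧ 0 < E.fireList lam s i ∧ 0 < E.fireList lam s j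

/-- A `J`-complement-dominant position: zero exactly at the nodes of `J`, positive elsewhere. -/
def JcDominant (J : Set ι) (lam : ι → ℝ) : Prop :=
  (∀ j ∈ J, lam j = 0) ∧ ∀ i ∉ J, 0 < lam i

open Classical in
/-- The Coxeter exponent `m i j` attached to the E-GCM: `m i j = k` if
`M i j * M j i = 4 cos²(π/k)` with `k ≥ 2`, and `m i j = 0` (representing `∞`)
if `M i j * M j i ≥ 4`. -/
noncomputable def m (E : EGCM ι) (i j : ι) : ℕ :=
  if i = j then 1
  else if h : ∃ k : ℕ, 2 ≤ k ∧ E.M i j * E.M j i = 4 * Real.cos (Real.pi / k) ^ 2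
    then Nat.find h else 0

theorem m_symm (E : EGCM ι) (i j : ι) : E.m i j = E.m j i := by
  unfold m
  rcases eq_or_ne i j with rfl | hij
  · simp
  · rw [if_neg hij, if_neg (Ne.symm hij)]
    by_cases h : ∃ k : ℕ, 2 ≤ k ∧ E.M i j * E.M j i = 4 * Real.cos (Real.pi / k) ^ 2
    · have h' : ∃ k : ℕ, 2 ≤ k ∧ E.M j i * E.M i j = 4 * Real.cos (Real.pi / k) ^ 2 := by
        rw [mul_comm]; exact h
      rw [dif_pos h, dif_pos h']
      exact le_antisymm (Nat.find_mono fun n hn => by rwa [mul_comm (E.M i j)])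
        (Nat.find_mono fun n hn => by rwa [mul_comm (E.M j i)])
    · have h' : ¬ ∃ k : ℕ, 2 ≤ k ∧ E.M j i * E.M i j = 4 * Real.cos (Real.pi / k) ^ 2 := by
        rw [mul_comm]; exact h
      rw [dif_neg h, dif_neg h']

theorem m_offDiag (E : EGCM ι) (i j : ι) (h : i ≠ j) : E.m i j ≠ 1 := by
  classical
  unfold m
  rw [if_neg h]
  split
  · rename_i hex
    have := Nat.find_spec hex
    omega
  · omega

/-- The Coxeter matrix associated to the E-GCM. -/
noncomputable def cox (E : EGCM ι) : CoxeterMatrix ι where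
  M := fun i j => E.m i j
  isSymm := by
    ext i j
    exact E.m_symm j i
  diagonal := by intro i; simp [m]
  off_diagonal := fun i j h => E.m_offDiag i j h

/-- The reflection `S i` of the geometric representation:
`S i v = v − 2 B(α i, v) • α i` where `B (α i, α j) = M i j / 2`. -/
noncomputable def S [DecidableEq ι] (E : EGCM ι) (i : ι) : Module.End ℝ (ι → ℝ) :=
  LinearMap.id -
    LinearMap.smulRight
      ((∑ k, E.M i k • LinearMap.proj k : (ι → ℝ) →ₗ[ℝ] ℝ)) (Pi.single i 1)

end EGCM

section Roots

variable {ι : Type*} [Fintype ι] [DecidableEq ι]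
variable {W : Type*} [Group W]

/-- `α` is a root for the geometric representation `σ`. -/
def IsRoot (σ : W →* Module.End ℝ (ι → ℝ)) (α : ι → ℝ) : Prop :=
  ∃ (w : W) (i : ι), σ w (Pi.single i 1) = α

/-- `α` is a positive root. -/
def IsPosRoot (σ : W →* Module.End ℝ (ι → ℝ)) (α : ι → ℝ) : Prop :=
  IsRoot σ α ∧ ∀ i, 0 ≤ α i

/-- `α` is a negative root. -/
def IsNegRoot (σ : W →* Module.End ℝ (ι → ℝ)) (α : ι → ℝ) : Prop :=
  IsRoot σ α ∧ ∀ i, α i ≤ 0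

/-- `N_M(w)`: the set of positive roots sent to negative roots by `w`. -/
def NM (σ : W →* Module.End ℝ (ι → ℝ)) (w : W) : Set (ι → ℝ) :=
  {α | IsPosRoot σ α ∧ IsNegRoot σ (σ w α)}

/-- `𝔖_M(α)`: the positive roots which are real multiples of `α`. -/
def Sfrak (σ : W →* Module.End ℝ (ι → ℝ)) (α : ι → ℝ) : Set (ι → ℝ) :=
  {β | (∃ K : ℝ, β = K • α) ∧ IsPosRoot σ β}

end Roots

section Parabolic

variable {ι : Type*} {W : Type*} [Group W]

/-- The standard parabolic subgroup `W_J`. -/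
def parabolic {M : CoxeterMatrix ι} (cs : CoxeterSystem M W) (J : Set ι) : Subgroup W :=
  Subgroup.closure (cs.simple '' J)

/-- The set `W^J` of minimal coset representatives. -/
def minReps {M : CoxeterMatrix ι} (cs : CoxeterSystem M W) (J : Set ι) : Set W :=
  {w | ∀ j ∈ J, cs.length w < cs.length (w * cs.simple j)}

end Parabolic

namespace EGCM

variable {ι : Type*} [Fintype ι]

/-- The E-GCM subgraph induced on a subset `I` of the nodes. -/
def restrict (E : EGCM ι) (I : Finset ι) : EGCM {x // x ∈ I} where
  M i j := E.M i j
  diag i := E.diag i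
  offDiag_nonpos i j h := E.offDiag_nonpos i j (fun hc => h (Subtype.ext hc))
  zero_iff i j := E.zero_iff i j
  prod_cond i j h := E.prod_cond i j (fun hc => h (Subtype.ext hc))

/-- Adjacent nodes `i`, `j` are odd-neighborly if `m i j` is odd. -/
def OddNeighborly (E : EGCM ι) (i j : ι) : Prop := E.Adj i j ∧ Odd (E.m i j)

/-- The factor `K_{j i} = −(M j i) / (2 cos (π / m i j))` attached to an
odd-neighborly pair `(i, j)`. -/
noncomputable def Kfac (E : EGCM ι) (i j : ι) : ℝ :=
  -E.M j i / (2 * Real.cos (Real.pi / (E.m i j : ℝ)))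

/-- `Π_P` for the ON-path `P` given by a list of nodes: the product of the factors
`K` along consecutive pairs. -/
noncomputable def piON (E : EGCM ι) : List ι → ℝ
  | [] => 1
  | [_] => 1
  | a :: b :: t => piON E (b :: t) * E.Kfac a b

/-- `y` can be reached from `x` by a path of odd neighbors. -/
def ONReach (E : EGCM ι) (x y : ι) : Prop :=
  ∃ l : List ι, l.Chain' E.OddNeighborly ∧ l.head? = some x ∧ l.getLast? = some y

/-- The ON-connected component containing `x` is unital ON-cyclic: every ON-cycle
whose nodes lie in this component has `Π = 1`. -/
def UnitalONCyclicAt (E : EGCM ι) (x : ι) : Prop :=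
  ∀ l : List ι, l ≠ [] → l.Chain' E.OddNeighborly → (∀ y ∈ l, E.ONReach x y) →
    l.head? = l.getLast? → E.piON l = 1

/-- The E-GCM graph has an odd asymmetry: an odd-neighborly pair `i`, `j` with
`M i j ≠ M j i`. -/
def HasOddAsymmetry (E : EGCM ι) : Prop :=
  ∃ i j, E.OddNeighborly i j ∧ E.M i j ≠ E.M j i

end EGCM

section FullComm

variable {ι : Type*} [Fintype ι] {W : Type*} [Group W]

/-- An elementary simplification of commuting type: interchange adjacent letters
`x`, `y` with `m x y = 2`. -/
def CommMove (E : EGCM ι) (l l' : List ι) : Prop :=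
  ∃ (u v : List ι) (x y : ι), E.m x y = 2 ∧ l = u ++ x :: y :: v ∧ l' = u ++ y :: x :: v

/-- `w` is fully commutative: any reduced word for `w` can be obtained from any other
by a sequence of elementary simplifications of commuting type. -/
def FullyCommutative (E : EGCM ι) {W : Type*} [Group W] (cs : CoxeterSystem E.cox W)
    (w : W) : Prop :=
  ∀ l l' : List ι,
    cs.IsReduced l.reverse → cs.wordProd l.reverse = w →
    cs.IsReduced l'.reverse → cs.wordProd l'.reverse = w →
    Relation.ReflTransGen (CommMove E) l l'

end FullComm

/-- The Coxeter graph of a Coxeter matrix: an edge between `i ≠ j` iff `m i j ≠ 2`. -/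
def coxGraph {ι : Type*} (cm : CoxeterMatrix ι) : SimpleGraph ι where
  Adj i j := i ≠ j ∧ cm i j ≠ 2
  symm := by
    constructor
    intro i j ⟨h1, h2⟩
    exact ⟨h1.symm, by rwa [cm.symmetric j i]⟩
  loopless := by constructor; intro i ⟨h, _⟩; exact h rfl

/-- The E-GCM `E` has associated exponents given by the Coxeter matrix `cm`:
`M i j * M j i = 4 cos² (π / cm i j)` when `cm i j ≠ 0` and `M i j * M j i ≥ 4`
when `cm i j = 0` (representing `∞`), with `M i j = 0` iff `cm i j = 2`. -/
def Compat {ι : Type*} [Fintype ι] (E : EGCM ι) (cm : CoxeterMatrix ι) : Prop :=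
  ∀ i j : ι, i ≠ j →
    (E.M i j = 0 ↔ cm i j = 2) ∧
    ((cm i j = 0 ∧ 4 ≤ E.M i j * E.M j i) ∨
      (cm i j ≠ 0 ∧ E.M i j * E.M j i = 4 * Real.cos (Real.pi / (cm i j : ℝ)) ^ 2))


/-!
Eriksson's strong convergence argument. Let `s` be a convergent game sequence from `lam` that
starts with `i`, and let `j` be a legal move. By induction on the length of `s`, every legal
move shortens a convergent game, so along the alternating play `i j i …` the remaining game
shrinks by one per move. If `M i j * M j i = 4 cos² (π / m)`, the two alternating plays of
length `m` are legal and end at the same position (read off the closed form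
`sin (s θ) / sin θ` of the rank-two game), so after `j` the game can be finished in fewer than
`s.length` moves. If `M i j * M j i ≥ 4`, the alternating play never stops, which is absurd.
Thus a legal move from a convergent position leads to a strictly shorter convergent game, and
no game from it can be infinite.
-/

open Real

noncomputable def sinSeq (θ X Y : ℝ) (s : ℕ) : ℝ :=
  (X * sin (s * θ) + Y * sin ((s - 1) * θ)) / sin θ

lemma sinSeq_zero {θ : ℝ} (hθ : sin θ ≠ 0) (X Y : ℝ) : sinSeq θ X Y 0 = -Y := by
  simp [sinSeq, neg_div, hθ]

lemma sinSeq_one {θ : ℝ} (hθ : sin θ ≠ 0) (X Y : ℝ) : sinSeq θ X Y 1 = X := by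
  simp [sinSeq, hθ]

lemma sinSeq_add_two (θ X Y : ℝ) (s : ℕ) :
    sinSeq θ X Y (s + 2) = 2 * cos θ * sinSeq θ X Y (s + 1) - sinSeq θ X Y s := by
  have key : ∀ x, sin (x + θ) = 2 * cos θ * sin x - sin (x - θ) := fun x => by
    rw [sin_add, sin_sub]; ring
  simp only [sinSeq, Nat.cast_add, Nat.cast_ofNat, Nat.cast_one]
  rw [show ((s : ℝ) + 2) * θ = (s + 1) * θ + θ by ring, key,
    show ((s : ℝ) + 2 - 1) * θ = s * θ + θ by ring, key,
    show ((s : ℝ) + 1 - 1) * θ = s * θ by ring, show (s + 1 : ℝ) * θ - θ = s * θ by ring,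
    show (s : ℝ) * θ - θ = (s - 1) * θ by ring]
  ring

lemma sin_pi_div_pos {m : ℕ} (hm : 2 ≤ m) : 0 < sin (π / m) :=
  sin_pos_of_pos_of_lt_pi (by positivity) (div_lt_self pi_pos (by exact_mod_cast hm))

lemma sinSeq_pi_div_pos {m : ℕ} (hm : 2 ≤ m) {X Y : ℝ} (hX : 0 < X) (hY : 0 < Y) {s : ℕ}
    (hs : 1 ≤ s) (hsm : s ≤ m) :
    0 < sinSeq (π / m) X Y s := by
  have hm0 : (0 : ℝ) < m := by positivity
  have hθ := sin_pi_div_pos hm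
  refine div_pos ?_ hθ
  rcases hsm.lt_or_eq with hlt | rfl
  · have hlt' : (s : ℝ) < m := by exact_mod_cast hlt
    have h1 : 0 < sin (s * (π / m)) := sin_pos_of_pos_of_lt_pi (by positivity)
      (by rw [← mul_div_assoc, div_lt_iff₀ hm0]; nlinarith [pi_pos])
    have h2 : 0 ≤ sin ((s - 1) * (π / m)) := sin_nonneg_of_nonneg_of_le_pi
      (mul_nonneg (by simp [hs]) (by positivity))
      (by rw [← mul_div_assoc, div_le_iff₀ hm0]; nlinarith [pi_pos])
    nlinarith
  · rw [show (s : ℝ) * (π / s) = π by field_simp,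
      show ((s : ℝ) - 1) * (π / s) = π - π / s by field_simp, sin_pi, sin_pi_sub]
    nlinarith

lemma sinSeq_pi_div_self {m : ℕ} (hm : 2 ≤ m) (X Y : ℝ) : sinSeq (π / m) X Y m = Y := by
  have hm0 : (m : ℝ) ≠ 0 := by positivity
  rw [sinSeq, show (m : ℝ) * (π / m) = π by field_simp,
    show ((m : ℝ) - 1) * (π / m) = π - π / m by field_simp, sin_pi, sin_pi_sub]
  field_simp [(sin_pi_div_pos hm).ne']
  ring

lemma sinSeq_pi_div_succ {m : ℕ} (hm : 2 ≤ m) (X Y : ℝ) :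
    sinSeq (π / m) X Y (m + 1) = -X := by
  have hm0 : (m : ℝ) ≠ 0 := by positivity
  rw [sinSeq, Nat.cast_add_one, show ((m : ℝ) + 1) * (π / m) = π / m + π by field_simp; ring,
    show ((m : ℝ) + 1 - 1) * (π / m) = π by rw [add_sub_cancel_right]; field_simp, sin_pi,
    sin_add_pi]
  field_simp [(sin_pi_div_pos hm).ne']
  ring

namespace EGCM

section AltWord

variable {ι : Type*}

def altWord (i j : ι) : ℕ → List ι
  | 0 => []
  | t + 1 => i :: altWord j i t

@[simp]
lemma length_altWord (i j : ι) (t : ℕ) : (altWord i j t).length = t := by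
  induction t generalizing i j with
  | zero => rfl
  | succ t ih => simp [altWord, ih]

lemma mem_altWord {i j k : ι} {t : ℕ} (hk : k ∈ altWord i j t) : k = i ∨ k = j := by
  induction t generalizing i j with
  | zero => simp [altWord] at hk
  | succ t ih =>
    rcases List.mem_cons.1 hk with rfl | hk
    · exact Or.inl rfl
    · exact (ih hk).symm

end AltWord

variable {ι : Type*} [Fintype ι] (E : EGCM ι)

lemma fireList_append (lam : ι → ℝ) (s t : List ι) :
    E.fireList lam (s ++ t) = E.fireList (E.fireList lam s) t := by
  induction s generalizing lam with
  | nil => rfl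
  | cons i s ih => exact ih _

lemma legal_append (lam : ι → ℝ) (s t : List ι) :
    E.Legal lam (s ++ t) ↔ E.Legal lam s ∧ E.Legal (E.fireList lam s) t := by
  induction s generalizing lam with
  | nil => simp [Legal, fireList]
  | cons i s ih => simp only [List.cons_append, Legal, fireList, ih, and_assoc]

lemma isGameSeq_append {lam : ι → ℝ} {w g : List ι} (hw : E.Legal lam w)
    (hg : E.IsGameSeq (E.fireList lam w) g) : E.IsGameSeq lam (w ++ g) :=
  ⟨(E.legal_append lam w g).2 ⟨hw, hg.1⟩, by rw [fireList_append]; exact hg.2⟩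

lemma fire_eq_sub (lam : ι → ℝ) (i : ι) : E.fire lam i = lam - lam i • E.M i := by
  funext k
  simp [fire, mul_comm]

lemma exists_isGameSeq_fireList {n : ℕ}
    (hstep : ∀ (mu : ι → ℝ) (s : List ι), E.IsGameSeq mu s → s.length < n →
      ∀ j, 0 < mu j → ∃ s', E.IsGameSeq (E.fire mu j) s' ∧ s'.length < s.length)
    (w : List ι) {lam : ι → ℝ} {s : List ι} (hs : E.IsGameSeq lam s) (hn : s.length < n)
    (hw : E.Legal lam w) :
    ∃ g, E.IsGameSeq (E.fireList lam w) g ∧ g.length + w.length ≤ s.length := by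
  induction w generalizing lam s with
  | nil => exact ⟨s, hs, by simp⟩
  | cons i w ih =>
    obtain ⟨s', hs', hlt⟩ := hstep lam s hs hn i hw.1
    obtain ⟨g, hg, hle⟩ := ih hs' (hlt.trans hn) hw.2
    exact ⟨g, hg, by simp only [List.length_cons]; omega⟩

section Rank2

variable {E} {i j : ι} {lam : ι → ℝ}

lemma fireList_eq_sub_of_mem (lam : ι → ℝ) (w : List ι) (hw : ∀ k ∈ w, k = i ∨ k = j) :
    ∃ A B : ℝ, E.fireList lam w = lam - A • E.M i - B • E.M j := by
  induction w generalizing lam with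
  | nil => exact ⟨0, 0, by simp [fireList]⟩
  | cons k w ih =>
    obtain ⟨A, B, h⟩ := ih (E.fire lam k) fun x hx => hw x (List.mem_cons_of_mem k hx)
    rcases hw k List.mem_cons_self with rfl | rfl
    · exact ⟨A + lam k, B, by rw [fireList, h, fire_eq_sub]; module⟩
    · exact ⟨A, B + lam k, by rw [fireList, h, fire_eq_sub]; module⟩

/-- The block `!![2, M j i; M i j, 2]` is invertible, so `A`, `B` in
`fireList_eq_sub_of_mem` are determined by the numbers at `i` and `j`. -/
lemma fireList_eq_of_apply_eq (hdet : E.M i j * E.M j i ≠ 4) {w w' : List ι}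
    (hw : ∀ k ∈ w, k = i ∨ k = j) (hw' : ∀ k ∈ w', k = i ∨ k = j)
    (hi : E.fireList lam w i = E.fireList lam w' i)
    (hj : E.fireList lam w j = E.fireList lam w' j) :
    E.fireList lam w = E.fireList lam w' := by
  obtain ⟨A, B, h⟩ := E.fireList_eq_sub_of_mem lam w hw
  obtain ⟨A', B', h'⟩ := E.fireList_eq_sub_of_mem lam w' hw'
  simp only [h, h', Pi.sub_apply, Pi.smul_apply, smul_eq_mul, E.diag] at hi hj
  have hA : (A - A') * (4 - E.M i j * E.M j i) = 0 := by
    linear_combination -2 * hi + E.M j i * hj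
  have hB : (B - B') * (4 - E.M i j * E.M j i) = 0 := by
    linear_combination -2 * hj + E.M i j * hi
  have hdet' : 4 - E.M i j * E.M j i ≠ 0 := sub_ne_zero.2 (Ne.symm hdet)
  rw [h, h', sub_eq_zero.1 ((mul_eq_zero.1 hA).resolve_right hdet'),
    sub_eq_zero.1 ((mul_eq_zero.1 hB).resolve_right hdet')]

lemma fire_fire_comm (h : E.M i j = 0) (lam : ι → ℝ) :
    E.fire (E.fire lam i) j = E.fire (E.fire lam j) i := by
  have h' : E.M j i = 0 := (E.zero_iff i j).1 h
  funext k
  simp only [fire, h, h']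
  ring

/-- The number at `i` rescaled by `√(-M i j)`: firing `i` then adds `√(M i j * M j i)` times
`symNum i j` to `symNum j i`, and symmetrically, so the pair `i`, `j` plays a symmetric game. -/
noncomputable def symNum (E : EGCM ι) (i j : ι) (lam : ι → ℝ) : ℝ := √(-E.M i j) * lam i

lemma symNum_pos (h : E.M i j < 0) (hi : 0 < lam i) : 0 < E.symNum i j lam :=
  mul_pos (Real.sqrt_pos.2 (neg_pos.2 h)) hi

lemma pos_of_symNum_pos (h : 0 < E.symNum i j lam) : 0 < lam i :=
  pos_of_mul_pos_right h (Real.sqrt_nonneg _)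

lemma symNum_fire_self (i j : ι) (lam : ι → ℝ) :
    E.symNum i j (E.fire lam i) = -E.symNum i j lam := by
  simp only [symNum, fire, E.diag]
  ring

lemma symNum_fire_other (hij : i ≠ j) (lam : ι → ℝ) :
    E.symNum j i (E.fire lam i) =
      E.symNum j i lam + √(-E.M i j) * √(-E.M j i) * E.symNum i j lam := by
  have h := Real.mul_self_sqrt (neg_nonneg.2 (E.offDiag_nonpos i j hij))
  simp only [symNum, fire]
  linear_combination (-√(-E.M j i) * lam i) * h

/-- `v (s + 1)` is the rescaled number fired at step `s` of the alternating play
`altWord i j` from `lam`. -/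
def IsAltSeq (E : EGCM ι) (i j : ι) (lam : ι → ℝ) (v : ℕ → ℝ) : Prop :=
  (∀ s, v (s + 2) = √(-E.M i j) * √(-E.M j i) * v (s + 1) - v s) ∧
    v 0 = -E.symNum j i lam ∧ v 1 = E.symNum i j lam

lemma IsAltSeq.fire {v : ℕ → ℝ} (hij : i ≠ j) (hv : E.IsAltSeq i j lam v) :
    E.IsAltSeq j i (E.fire lam i) (fun s => v (s + 1)) :=
  ⟨fun s => by rw [mul_comm (√(-E.M j i))]; exact hv.1 (s + 1),
    by rw [symNum_fire_self, ← hv.2.2, neg_neg],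
    by simp only [symNum_fire_other hij, hv.1 0, hv.2.1, hv.2.2]; ring⟩

lemma IsAltSeq.legal {v : ℕ → ℝ} (hij : i ≠ j) (hv : E.IsAltSeq i j lam v) {t : ℕ}
    (hpos : ∀ s, 1 ≤ s → s ≤ t → 0 < v s) : E.Legal lam (altWord i j t) := by
  induction t generalizing i j lam v with
  | zero => trivial
  | succ t ih =>
    refine ⟨pos_of_symNum_pos (hv.2.2 ▸ hpos 1 le_rfl (by omega)), ?_⟩
    exact ih hij.symm (hv.fire hij) fun s h1 h2 => hpos (s + 1) (by omega) (by omega)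

lemma IsAltSeq.symNum_fireList {v : ℕ → ℝ} (hij : i ≠ j) (hv : E.IsAltSeq i j lam v)
    (t : ℕ) :
    E.symNum i j (E.fireList lam (altWord i j t)) = (if Even t then v (t + 1) else -v t) ∧
      E.symNum j i (E.fireList lam (altWord i j t)) = (if Even t then -v t else v (t + 1)) := by
  induction t generalizing i j lam v with
  | zero => simp [altWord, fireList, hv.2.1, hv.2.2]
  | succ t ih =>
    obtain ⟨h1, h2⟩ := ih hij.symm (hv.fire hij)
    simp only [altWord, fireList, Nat.even_add_one, ite_not] at h1 h2 ⊢
    exact ⟨h2, h1⟩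

lemma eq_of_symNum_eq (h : E.M i j < 0) {p q : ι → ℝ} (hpq : E.symNum i j p = E.symNum i j q) :
    p i = q i :=
  mul_left_cancel₀ (Real.sqrt_pos.2 (neg_pos.2 h)).ne' hpq

lemma sqrt_mul_sqrt_of_cos (hij : i ≠ j) {m : ℕ} (hm : 2 ≤ m)
    (hcos : E.M i j * E.M j i = 4 * cos (π / m) ^ 2) :
    √(-E.M i j) * √(-E.M j i) = 2 * cos (π / m) := by
  have hcos0 : 0 ≤ cos (π / m) := cos_nonneg_of_mem_Icc
    ⟨by linarith [pi_pos, div_nonneg pi_pos.le (Nat.cast_nonneg (α := ℝ) m)],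
      div_le_div_of_nonneg_left pi_pos.le two_pos (by exact_mod_cast hm)⟩
  rw [← Real.sqrt_mul (neg_nonneg.2 (E.offDiag_nonpos i j hij)), neg_mul_neg, hcos,
    show 4 * cos (π / m) ^ 2 = (2 * cos (π / m)) ^ 2 by ring,
    Real.sqrt_sq (mul_nonneg zero_le_two hcos0)]

lemma isAltSeq_sinSeq {θ : ℝ} (hθ : sin θ ≠ 0)
    (hc : √(-E.M i j) * √(-E.M j i) = 2 * cos θ) :
    E.IsAltSeq i j lam (sinSeq θ (E.symNum i j lam) (E.symNum j i lam)) :=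
  ⟨fun s => hc ▸ sinSeq_add_two _ _ _ s, sinSeq_zero hθ _ _, sinSeq_one hθ _ _⟩

lemma legal_altWord_of_cos (hij : i ≠ j) (hMij : E.M i j < 0) (hMji : E.M j i < 0) {m : ℕ}
    (hm : 2 ≤ m) (hcos : E.M i j * E.M j i = 4 * cos (π / m) ^ 2)
    (hi : 0 < lam i) (hj : 0 < lam j) : E.Legal lam (altWord i j m) :=
  (E.isAltSeq_sinSeq (sin_pi_div_pos hm).ne' (E.sqrt_mul_sqrt_of_cos hij hm hcos)).legal hij
    fun _ hs hsm => sinSeq_pi_div_pos hm (symNum_pos hMij hi) (symNum_pos hMji hj) hs hsm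

lemma fireList_altWord_comm_of_cos (hij : i ≠ j) (hMij : E.M i j < 0) (hMji : E.M j i < 0)
    {m : ℕ} (hm : 2 ≤ m) (hcos : E.M i j * E.M j i = 4 * cos (π / m) ^ 2) :
    E.fireList lam (altWord i j m) = E.fireList lam (altWord j i m) := by
  have hθ := sin_pi_div_pos hm
  have hdet : E.M i j * E.M j i ≠ 4 := by
    nlinarith [sin_sq_add_cos_sq (π / m)]
  obtain ⟨hp₁, hp₂⟩ := (E.isAltSeq_sinSeq (lam := lam) hθ.ne'
    (E.sqrt_mul_sqrt_of_cos hij hm hcos)).symNum_fireList hij m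
  obtain ⟨hq₁, hq₂⟩ := (E.isAltSeq_sinSeq (lam := lam) hθ.ne'
    (E.sqrt_mul_sqrt_of_cos hij.symm hm (by rw [mul_comm, hcos]))).symNum_fireList hij.symm m
  simp only [sinSeq_pi_div_self hm, sinSeq_pi_div_succ hm] at hp₁ hp₂ hq₁ hq₂
  refine E.fireList_eq_of_apply_eq hdet (fun _ => mem_altWord) (fun _ => Or.symm ∘ mem_altWord)
    (eq_of_symNum_eq hMij ?_) (eq_of_symNum_eq hMji ?_)
  · rw [hp₁, hq₂]
  · rw [hp₂, hq₁]

lemma legal_altWord_of_four_le (hij : i ≠ j) (h4 : 4 ≤ E.M i j * E.M j i)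
    (hX : 0 < E.symNum i j lam) (hXY : 0 < E.symNum i j lam + E.symNum j i lam) (t : ℕ) :
    E.Legal lam (altWord i j t) := by
  induction t generalizing i j lam with
  | zero => trivial
  | succ t ih =>
    have hc : 2 ≤ √(-E.M i j) * √(-E.M j i) := by
      rw [← Real.sqrt_mul (neg_nonneg.2 (E.offDiag_nonpos i j hij)), neg_mul_neg,
        Real.le_sqrt (by norm_num) (by linarith)]
      linarith
    have hcX := mul_le_mul_of_nonneg_right hc hX.le
    refine ⟨pos_of_symNum_pos hX, ih hij.symm (by rwa [mul_comm]) ?_ ?_⟩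
    · rw [symNum_fire_other hij]; linarith
    · rw [symNum_fire_other hij, symNum_fire_self]; linarith

lemma braid_or_legal_altWord (hi : 0 < lam i) (hj : 0 < lam j) :
    (∃ m, 0 < m ∧ E.Legal lam (altWord i j m) ∧ E.Legal lam (altWord j i m) ∧
      E.fireList lam (altWord i j m) = E.fireList lam (altWord j i m)) ∨
    ∀ t, E.Legal lam (altWord i j t) := by
  by_cases hij : i = j
  · subst hij
    exact Or.inl ⟨1, one_pos, ⟨hi, trivial⟩, ⟨hi, trivial⟩, rfl⟩
  by_cases h0 : E.M i j = 0
  · have h0' : E.M j i = 0 := (E.zero_iff i j).1 h0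
    refine Or.inl ⟨2, two_pos, ⟨hi, ?_, trivial⟩, ⟨hj, ?_, trivial⟩,
      E.fire_fire_comm h0 lam⟩
    · simpa [fire, h0] using hj
    · simpa [fire, h0'] using hi
  have hMij : E.M i j < 0 := (E.offDiag_nonpos i j hij).lt_of_ne h0
  have hMji : E.M j i < 0 :=
    (E.offDiag_nonpos j i (Ne.symm hij)).lt_of_ne fun h => h0 ((E.zero_iff j i).1 h)
  rcases E.prod_cond i j hij (mul_pos_of_neg_of_neg hMij hMji).ne' with h4 | ⟨m, hm, hcos⟩
  · exact Or.inr (legal_altWord_of_four_le hij h4 (symNum_pos hMij hi)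
      (add_pos (symNum_pos hMij hi) (symNum_pos hMji hj)))
  · exact Or.inl ⟨m, by omega, legal_altWord_of_cos hij hMij hMji (by omega) hcos hi hj,
      legal_altWord_of_cos (Ne.symm hij) hMji hMij (by omega) (by rw [mul_comm, hcos]) hj hi,
      fireList_altWord_comm_of_cos hij hMij hMji (by omega) hcos⟩

end Rank2

theorem exists_isGameSeq_fire {lam : ι → ℝ} {s : List ι} (hs : E.IsGameSeq lam s) {j : ι}
    (hj : 0 < lam j) : ∃ s', E.IsGameSeq (E.fire lam j) s' ∧ s'.length < s.length := by
  induction hn : s.length using Nat.strong_induction_on generalizing lam s j with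
  | _ n ih =>
    obtain _ | ⟨i, tail⟩ := s
    · exact absurd (hs.2 j) (not_le.2 hj)
    have htail : E.IsGameSeq (E.fire lam i) tail := ⟨hs.1.2, hs.2⟩
    have hstep : ∀ (mu : ι → ℝ) (s : List ι), E.IsGameSeq mu s → s.length < n →
        ∀ k, 0 < mu k → ∃ s', E.IsGameSeq (E.fire mu k) s' ∧ s'.length < s.length :=
      fun _ s hs hlt _ hk => ih _ hlt hs hk rfl
    have hlen : tail.length < n := by simp [← hn]
    rcases E.braid_or_legal_altWord hs.1.1 hj with ⟨_ | m, hm, hij, hji, heq⟩ | hinf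
    · omega
    · obtain ⟨g, hg, hle⟩ :=
        E.exists_isGameSeq_fireList hstep (altWord j i m) htail hlen hij.2
      have hend : E.fireList (E.fire lam j) (altWord i j m) =
          E.fireList (E.fire lam i) (altWord j i m) := heq.symm
      refine ⟨altWord i j m ++ g, E.isGameSeq_append hji.2 (hend ▸ hg), ?_⟩
      simp only [List.length_append, length_altWord] at hle ⊢
      omega
    · obtain ⟨g, hg, hle⟩ :=
        E.exists_isGameSeq_fireList hstep (altWord j i n) htail hlen (hinf (n + 1)).2
      simp only [length_altWord] at hle
      omega

lemma posAt_fire (lam : ι → ℝ) (f : ℕ → ι) (k : ℕ) :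
    E.posAt (E.fire lam (f 0)) (fun t => f (t + 1)) k = E.posAt lam f (k + 1) := by
  induction k with
  | zero => rfl
  | succ k ih => simp only [posAt, ih]

variable {E} in
lemma DivergentSeq.fire {lam : ι → ℝ} {f : ℕ → ι} (hf : E.DivergentSeq lam f) :
    E.DivergentSeq (E.fire lam (f 0)) (fun t => f (t + 1)) := fun k => by
  rw [posAt_fire]
  exact hf (k + 1)

theorem not_isGameSeq_of_divergentSeq {lam : ι → ℝ} {f : ℕ → ι}
    (hf : E.DivergentSeq lam f) (s : List ι) : ¬ E.IsGameSeq lam s := by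
  induction hn : s.length using Nat.strong_induction_on generalizing lam s f with
  | _ n ih =>
    intro hs
    obtain ⟨s', hs', hlt⟩ := E.exists_isGameSeq_fire hs (hf 0)
    exact ih _ (hn ▸ hlt) hf.fire s' rfl hs'

end EGCM

/-- **Lemma 2.2.** For any E-GCM graph, if a game sequence for an initial position `lam`
diverges, then all game sequences for `lam` diverge (there is no convergent game sequence). -/
theorem egcm_divergent_forces_all_divergent {ι : Type*} [Fintype ι] (E : EGCM ι)
    (lam : ι → ℝ) (hdiv : ∃ f : ℕ → ι, E.DivergentSeq lam f) :
    ¬ ∃ s : List ι, E.IsGameSeq lam s := by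
  obtain ⟨f, hf⟩ := hdiv
  rintro ⟨s, hs⟩
  exact E.not_isGameSeq_of_divergentSeq hf s hs
end

section
/- Suppose the E-GCM graph (Γ,M) is connected and λ is a nonzero dominant position. Then in any convergent game sequence from λ, every node of Γ is fired at least once. -/
/-! A node that is never fired only gains value: every other firing `a` adds
`-M a i * lam a ≥ 0` to it, strictly when `a` is a neighbour. In a game sequence from a
dominant position it starts at `≥ 0` and ends at `≤ 0`, so no neighbour of an unfired node is
fired; by connectedness either every node or no node is fired, and firing none forces
`lam = 0`. -/

theorem SimpleGraph.Reachable.of_forall_adj {V : Type*} {G : SimpleGraph V} {P : V → Prop}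
    (hP : ∀ u v, G.Adj u v → P u → P v) {u v : V} (h : G.Reachable u v) (hu : P u) : P v := by
  rw [G.reachable_iff_reflTransGen] at h
  induction h with
  | refl => exact hu
  | tail _ hab ih => exact hP _ _ hab ih

namespace EGCM

variable {ι : Type*} [Fintype ι] (E : EGCM ι) {lam : ι → ℝ} {a i : ι}

theorem le_fire_apply (hai : a ≠ i) (ha : 0 ≤ lam a) : lam i ≤ E.fire lam a i := by
  have := E.offDiag_nonpos a i hai
  simp only [fire]
  nlinarith

theorem lt_fire_apply (hai : a ≠ i) (hM : E.M a i ≠ 0) (ha : 0 < lam a) :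
    lam i < E.fire lam a i := by
  have := lt_of_le_of_ne (E.offDiag_nonpos a i hai) hM
  simp only [fire]
  nlinarith

theorem le_fireList_apply_of_notMem {s : List ι} (hs : E.Legal lam s) (hi : i ∉ s) :
    lam i ≤ E.fireList lam s i := by
  induction s generalizing lam with
  | nil => exact le_rfl
  | cons a t ih =>
    obtain ⟨hai, hit⟩ := not_or.1 (List.mem_cons.not.1 hi)
    exact (E.le_fire_apply (Ne.symm hai) hs.1.le).trans (ih hs.2 hit)

theorem lt_fireList_apply_of_notMem {s : List ι} (hs : E.Legal lam s) (hi : i ∉ s)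
    (ha : a ∈ s) (hM : E.M a i ≠ 0) : lam i < E.fireList lam s i := by
  induction s generalizing lam with
  | nil => cases ha
  | cons b t ih =>
    obtain ⟨hbi, hit⟩ := not_or.1 (List.mem_cons.not.1 hi)
    rcases List.mem_cons.1 ha with rfl | hat
    · exact (E.lt_fire_apply (Ne.symm hbi) hM hs.1).trans_le
        (E.le_fireList_apply_of_notMem hs.2 hit)
    · exact (E.le_fire_apply (Ne.symm hbi) hs.1.le).trans_lt (ih hs.2 hit hat)

variable {E}

theorem IsGameSeq.notMem_of_adj {s : List ι} (hs : E.IsGameSeq lam s) (hdom : Dominant lam)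
    {j : ι} (hij : E.graph.Adj i j) (hi : i ∉ s) : j ∉ s := fun hj =>
  have hM : E.M j i ≠ 0 := fun h => hij.2 ((E.zero_iff i j).2 h)
  (hdom i).not_gt <| (E.lt_fireList_apply_of_notMem hs.1 hi hj hM).trans_le (hs.2 i)

theorem IsGameSeq.eq_zero_of_nil (hs : E.IsGameSeq lam []) (hdom : Dominant lam) : lam = 0 :=
  funext fun k => le_antisymm (hs.2 k) (hdom k)

end EGCM

/-- **Lemma 2.6.** On a connected E-GCM graph, in any convergent game sequence for a
nonzero dominant position, every node is fired at least once. -/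
theorem egcm_connected_every_node_fired {ι : Type*} [Fintype ι] (E : EGCM ι)
    (hconn : E.graph.Connected) (lam : ι → ℝ) (hdom : EGCM.Dominant lam) (hne : lam ≠ 0)
    (s : List ι) (hs : E.IsGameSeq lam s) :
    ∀ i : ι, i ∈ s := by
  intro i
  by_contra hi
  have hnil : s = [] := List.eq_nil_iff_forall_not_mem.2 fun j =>
    (hconn i j).of_forall_adj (fun _ _ hab => hs.notMem_of_adj hdom hab) hi
  subst hnil
  exact hne (hs.eq_zero_of_nil hdom)
end

section
/- Let J ⊆ I_n with the parabolic subgroup W_J finite, and let λ be a J^c-dominant position. If s_{i_p}···s_{i_2}s_{i_1} is a reduced expression for an element of W^J, then (γ_{i_1},…,γ_{i_p}) is a legal sequence of node firings from the initial position λ; equivalently, the root s_{i_1}s_{i_2}···s_{i_{q−1}}.α_{i_q} is positive for each 1 ≤ q ≤ p and its pairing with λ is positive. -/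
/-!
A root `w.α_i` with `ℓ(w s_i) > ℓ(w)` is positive: for a right descent `j` of `w`, write
`w = u v` with `v` a longest possible alternating word in `s_i, s_j` splitting off on the right.
Then `u.α_i` and `u.α_j` are positive by induction on length, and `v.α_i` is a combination of
`α_i, α_j` whose coefficients, after rescaling `α_j`, are Chebyshev values `S_k(t)` with
`t = √(M_ij M_ji)`; these are nonnegative because `t ≥ 2`, or `t = 2 cos(π/m_ij)` and
`k < m_ij` (the alternating word is reduced and shorter than the braid relation).

Firing node `i` is dual to `S_i`, i.e. `⟨fire(λ, i), v⟩ = ⟨λ, S_i v⟩`, so the number at the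
`q`-th fired node is `⟨λ, β_q⟩` with `β_q = s_{i_1} ⋯ s_{i_{q-1}}.α_{i_q}`, a positive root.
If `⟨λ, β_q⟩ = 0`, then `β_q` is supported on `J`, hence `w.β_q ≥ 0` because `w ∈ W^J`; but
`w.β_q = -(s_{i_p} ⋯ s_{i_{q+1}}).α_{i_q}` is a negative root.
-/

theorem MonoidHom.map_inv_apply_map_apply {G R V : Type*} [Group G] [Semiring R]
    [AddCommMonoid V] [Module R V] (σ : G →* Module.End R V) (g : G) (v : V) :
    σ g⁻¹ (σ g v) = v := by
  rw [← Module.End.mul_apply, ← map_mul, inv_mul_cancel, map_one, Module.End.one_apply]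

namespace Polynomial.Chebyshev

open Real

theorem S_eval_add_two {R : Type*} [CommRing R] (x : R) (n : ℤ) :
    (S R (n + 2)).eval x = x * (S R (n + 1)).eval x - (S R n).eval x := by
  simp [S_add_two]

theorem S_real_two_mul_cos (θ : ℝ) (n : ℤ) :
    (S ℝ n).eval (2 * cos θ) * sin θ = sin ((n + 1) * θ) := by
  rw [← U_real_cos, ← S_comp_two_mul_X, eval_comp]
  simp

theorem S_eval_nonneg_of_two_le {t : ℝ} (ht : 2 ≤ t) {n : ℤ} (hn : -1 ≤ n) :
    0 ≤ (S ℝ n).eval t := by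
  have key : ∀ k : ℕ, 0 ≤ (S ℝ (k - 1)).eval t ∧ (S ℝ (k - 1)).eval t ≤ (S ℝ k).eval t := by
    intro k
    induction k with
    | zero => simp
    | succ k ih =>
      have hrec := S_eval_add_two t (k - 1)
      rw [show (k : ℤ) - 1 + 2 = k + 1 by ring, sub_add_cancel] at hrec
      push_cast
      rw [add_sub_cancel_right, hrec]
      constructor <;> nlinarith
  obtain ⟨k, rfl⟩ : ∃ k : ℕ, n = k - 1 := ⟨(n + 1).toNat, by omega⟩
  exact (key k).1

theorem S_eval_two_mul_cos_pi_div_nonneg {m : ℕ} (hm : 2 ≤ m) {n : ℤ} (hn : -1 ≤ n)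
    (hnm : n < m) : 0 ≤ (S ℝ n).eval (2 * cos (π / m)) := by
  have hm' : (2 : ℝ) ≤ m := by exact_mod_cast hm
  have hsin : 0 < sin (π / m) :=
    sin_pos_of_pos_of_lt_pi (by positivity) (div_lt_self pi_pos (by linarith))
  refine nonneg_of_mul_nonneg_left ?_ hsin
  rw [S_real_two_mul_cos]
  have hn' : (0 : ℝ) ≤ n + 1 := by exact_mod_cast (by omega : (0 : ℤ) ≤ n + 1)
  have hnm' : (n : ℝ) + 1 ≤ m := by exact_mod_cast (by omega : n + 1 ≤ (m : ℤ))
  apply sin_nonneg_of_nonneg_of_le_pi (by positivity)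
  calc (n + 1) * (π / m) ≤ m * (π / m) := by gcongr
    _ = π := by field_simp

end Polynomial.Chebyshev

namespace CoxeterSystem

variable {B W : Type*} [Group W] {M : CoxeterMatrix B} (cs : CoxeterSystem M W)

theorem not_isRightDescent_of_length_mul_wordProd_cons {u : W} {i : B} {ω : List B}
    (h : cs.length u + (ω.length + 1) ≤ cs.length (u * cs.wordProd (i :: ω))) :
    ¬cs.IsRightDescent u i := by
  have h₁ := cs.length_mul_le (u * cs.simple i) (cs.wordProd ω)
  have h₂ := cs.length_wordProd_le ω
  rw [wordProd_cons, ← mul_assoc] at h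
  rw [IsRightDescent]
  omega

theorem not_isRightDescent_wordProd_of_isReduced {ω : List B} {i : B}
    (h : cs.IsReduced (ω ++ [i])) : ¬cs.IsRightDescent (cs.wordProd ω) i := by
  apply cs.not_isRightDescent_of_length_mul_wordProd_cons (ω := [])
  have := cs.length_wordProd_le ω
  rw [← wordProd_append, h.eq]
  simp
  omega

theorem exists_alternating_factorization (w : W) (i j : B) :
    ∃ u n, w = u * cs.wordProd (alternatingWord i j n) ∧ cs.length u + n = cs.length w ∧
      ¬cs.IsRightDescent u (if Even n then j else i) := by
  classical
  let P : ℕ → Prop := fun n =>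
    ∃ u, w = u * cs.wordProd (alternatingWord i j n) ∧ cs.length u + n = cs.length w
  have hP0 : P 0 := ⟨w, by simp [alternatingWord], by simp⟩
  have hP_le : ∀ n, P n → n ≤ cs.length w := fun n ⟨u, _, h⟩ => by omega
  set N := Nat.findGreatest P (cs.length w)
  obtain ⟨u, hw, hlen⟩ : P N := Nat.findGreatest_spec (Nat.zero_le _) hP0
  refine ⟨u, N, hw, hlen, fun hdesc => ?_⟩
  -- a descent at the next letter would extend the alternating suffix
  have hP_succ : P (N + 1) := by
    refine ⟨u * cs.simple (if Even N then j else i), ?_, ?_⟩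
    · rw [alternatingWord_succ', wordProd_cons, mul_assoc, simple_mul_simple_cancel_left, hw]
    · have := (cs.isRightDescent_iff).1 hdesc
      omega
  exact Nat.findGreatest_is_greatest (Nat.lt_succ_self N) (hP_le _ hP_succ) hP_succ

theorem lt_of_alternating_factorization {w u : W} {i j : B} {n : ℕ}
    (hi : ¬cs.IsRightDescent w i) (hw : w = u * cs.wordProd (alternatingWord i j n))
    (hlen : cs.length u + n = cs.length w) (hM : M i j ≠ 0) : n < M i j := by
  have hred : cs.IsReduced (alternatingWord i j n) := by
    have h₁ := cs.length_mul_le u (cs.wordProd (alternatingWord i j n))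
    have h₂ := cs.length_wordProd_le (alternatingWord i j n)
    rw [← hw] at h₁
    rw [length_alternatingWord] at h₂
    rw [IsReduced, length_alternatingWord]
    omega
  have hle : n ≤ M i j := not_lt.1 fun h => cs.not_isReduced_alternatingWord i j hM h hred
  refine lt_of_le_of_ne hle fun heq => hi ?_
  -- at `n = M i j` the braid relation moves a final `s i` onto the alternating word
  obtain ⟨k, rfl⟩ := Nat.exists_eq_succ_of_ne_zero (heq ▸ hM : n ≠ 0)
  have hbraid : cs.wordProd (alternatingWord i j (k + 1))
      = cs.wordProd (alternatingWord i j k) * cs.simple i := by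
    have h := cs.wordProd_braidWord_eq i j
    rw [braidWord, braidWord, M.symmetric j i, ← heq] at h
    rw [h, alternatingWord_succ, wordProd_concat]
  have h₁ := cs.length_mul_le u (cs.wordProd (alternatingWord i j k))
  have h₂ := cs.length_wordProd_le (alternatingWord i j k)
  rw [IsRightDescent, ← hlen, hw, hbraid, ← mul_assoc, mul_assoc _ (cs.simple i),
    simple_mul_simple_self, mul_one]
  rw [length_alternatingWord] at h₂
  omega

theorem exists_alternating_factorization_of_isRightDescent {w : W} {i j : B}
    (hi : ¬cs.IsRightDescent w i) (hj : cs.IsRightDescent w j) :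
    ∃ u n, w = u * cs.wordProd (alternatingWord i j n) ∧ cs.length u < cs.length w ∧
      ¬cs.IsRightDescent u i ∧ ¬cs.IsRightDescent u j ∧ (M i j = 0 ∨ n < M i j) := by
  obtain ⟨u, n, hw, hlen, hnext⟩ := cs.exists_alternating_factorization w i j
  obtain ⟨k, rfl⟩ : ∃ k, n = k + 1 := by
    refine Nat.exists_eq_succ_of_ne_zero fun hn => hnext ?_
    subst hn
    simp only [alternatingWord, wordProd_nil, mul_one] at hw
    simpa [← hw] using hj
  have hlast : ¬cs.IsRightDescent u (if Even k then j else i) := by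
    apply cs.not_isRightDescent_of_length_mul_wordProd_cons (ω := alternatingWord i j k)
    rw [← alternatingWord_succ', ← hw, length_alternatingWord]
    omega
  refine ⟨u, k + 1, hw, by omega, ?_, ?_, ?_⟩
  · rcases Nat.even_or_odd k with hk | hk
    · simpa [hk, Nat.even_add_one] using hnext
    · simpa [Nat.not_even_iff_odd.2 hk] using hlast
  · rcases Nat.even_or_odd k with hk | hk
    · simpa [hk] using hlast
    · simpa [Nat.even_add_one, hk] using hnext
  · exact (eq_or_ne (M i j) 0).imp_right (cs.lt_of_alternating_factorization hi hw hlen)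

end CoxeterSystem

namespace EGCM

open Real Polynomial CoxeterSystem

variable {ι : Type*} [Fintype ι] (E : EGCM ι)

open Classical in
theorem two_le_m_and_M_mul_M_eq {i j : ι} (hij : i ≠ j) (hm : E.m i j ≠ 0) :
    2 ≤ E.m i j ∧ E.M i j * E.M j i = 4 * cos (π / E.m i j) ^ 2 := by
  unfold m at hm ⊢
  rw [if_neg hij] at hm ⊢
  split_ifs at hm ⊢ with h
  · exact Nat.find_spec h
  · exact absurd rfl hm

open Classical in
theorem four_le_M_mul_M {i j : ι} (hij : i ≠ j) (hm : E.m i j = 0) :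
    4 ≤ E.M i j * E.M j i := by
  unfold m at hm
  rw [if_neg hij] at hm
  split_ifs at hm with h
  · exact absurd hm (by have := Nat.find_spec h; omega)
  -- `m i j = 2` would be witnessed by `M i j = 0`, since `cos (π / 2) = 0`
  have hM : E.M i j ≠ 0 := fun h0 =>
    h ⟨2, le_rfl, by simp [h0, (E.zero_iff i j).1 h0, cos_pi_div_two]⟩
  have hprod : E.M i j * E.M j i ≠ 0 := mul_ne_zero hM ((E.zero_iff i j).not.1 hM)
  rcases E.prod_cond i j hij hprod with h4 | ⟨k, hk, heq⟩
  · exact h4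
  · exact absurd ⟨k, by omega, heq⟩ h

theorem two_le_sqrt_M_mul_M {i j : ι} (hij : i ≠ j) (hm : E.m i j = 0) :
    2 ≤ √(E.M i j * E.M j i) :=
  le_sqrt_of_sq_le (by linarith [E.four_le_M_mul_M hij hm])

theorem sqrt_M_mul_M_eq {i j : ι} (hij : i ≠ j) (hm : E.m i j ≠ 0) :
    √(E.M i j * E.M j i) = 2 * cos (π / E.m i j) := by
  obtain ⟨hm2, heq⟩ := E.two_le_m_and_M_mul_M_eq hij hm
  have hpos : 0 ≤ π / E.m i j := by positivity
  have hle : π / E.m i j ≤ π / 2 :=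
    div_le_div_of_nonneg_left pi_pos.le two_pos (by exact_mod_cast hm2)
  have hcos : 0 ≤ cos (π / E.m i j) :=
    cos_nonneg_of_neg_pi_div_two_le_of_le (by linarith [pi_pos]) hle
  rw [heq, show 4 * cos (π / E.m i j) ^ 2 = (2 * cos (π / E.m i j)) ^ 2 by ring,
    sqrt_sq (by positivity)]

/-- Rescaling `α j` by `r` makes the rank-two action of `S i`, `S j` symmetric, with
off-diagonal entry `-√(M i j * M j i)`. -/
theorem exists_symmetrizing_scale {i j : ι} (hij : i ≠ j) :
    ∃ r : ℝ, 0 ≤ r ∧ -E.M i j * r = √(E.M i j * E.M j i) ∧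
      √(E.M i j * E.M j i) * r = -E.M j i := by
  have hneg := E.offDiag_nonpos i j hij
  rcases hneg.lt_or_eq with hlt | h0
  · have hM : E.M i j ≠ 0 := hlt.ne
    have hnn : 0 ≤ E.M i j * E.M j i :=
      mul_nonneg_of_nonpos_of_nonpos hneg (E.offDiag_nonpos j i hij.symm)
    refine ⟨√(E.M i j * E.M j i) / -E.M i j, div_nonneg (sqrt_nonneg _) (neg_nonneg.2 hneg),
      by field_simp, ?_⟩
    rw [← mul_div_assoc, ← sq, sq_sqrt hnn]
    field_simp
  · refine ⟨1, zero_le_one, by simp [h0], by simp [h0, (E.zero_iff i j).1 h0]⟩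

theorem legal_of_forall_fireList_take_pos (lam : ι → ℝ) (l : List ι)
    (h : ∀ q : Fin l.length, 0 < E.fireList lam (l.take q) (l.get q)) : E.Legal lam l := by
  induction l generalizing lam with
  | nil => trivial
  | cons i s ih =>
    refine ⟨by simpa [fireList] using h ⟨0, by simp⟩, ih _ fun q => ?_⟩
    simpa [fireList] using h q.succ

variable [DecidableEq ι]

theorem S_apply (i : ι) (v : ι → ℝ) : E.S i v = v - (E.M i ⬝ᵥ v) • Pi.single i 1 := by
  simp [S, dotProduct]

theorem S_apply_single_self (i : ι) : E.S i (Pi.single i 1) = -Pi.single i 1 := by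
  rw [S_apply, dotProduct_single, E.diag]
  module

theorem S_apply_left (i j : ι) (p q : ℝ) :
    E.S i (p • Pi.single i 1 + q • Pi.single j 1)
      = (-E.M i j * q - p) • Pi.single i 1 + q • Pi.single j 1 := by
  rw [S_apply, dotProduct_add, dotProduct_smul, dotProduct_smul, dotProduct_single,
    dotProduct_single, E.diag]
  simp only [smul_eq_mul]
  module

theorem S_apply_right (i j : ι) (p q : ℝ) :
    E.S j (p • Pi.single i 1 + q • Pi.single j 1)
      = p • Pi.single i 1 + (-E.M j i * p - q) • Pi.single j 1 := by
  rw [S_apply, dotProduct_add, dotProduct_smul, dotProduct_smul, dotProduct_single,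
    dotProduct_single, E.diag]
  simp only [smul_eq_mul]
  module

theorem fire_dotProduct (lam v : ι → ℝ) (i : ι) :
    E.fire lam i ⬝ᵥ v = lam ⬝ᵥ E.S i v := by
  have hfire : E.fire lam i = lam - lam i • E.M i := by
    ext j
    simp [fire, mul_comm]
  rw [hfire, S_apply, sub_dotProduct, dotProduct_sub, smul_dotProduct, dotProduct_smul,
    dotProduct_single, smul_eq_mul, smul_eq_mul, mul_one, mul_comm]

variable {W : Type*} [Group W] {cs : CoxeterSystem E.cox W} {σ : W →* Module.End ℝ (ι → ℝ)}

theorem wordProd_alternatingWord_apply_single (hσ : ∀ i, σ (cs.simple i) = E.S i) {i j : ι}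
    {t r : ℝ} (ht : -E.M i j * r = t) (hr : t * r = -E.M j i) (k : ℕ) :
    σ (cs.wordProd (alternatingWord i j (2 * k))) (Pi.single i 1)
        = (Chebyshev.S ℝ (2 * k)).eval t • Pi.single i 1
          + (r * (Chebyshev.S ℝ (2 * k - 1)).eval t) • Pi.single j 1 ∧
      σ (cs.wordProd (alternatingWord i j (2 * k + 1))) (Pi.single i 1)
        = (Chebyshev.S ℝ (2 * k)).eval t • Pi.single i 1
          + (r * (Chebyshev.S ℝ (2 * k + 1)).eval t) • Pi.single j 1 := by
  have hσ_cons : ∀ c ω, σ (cs.wordProd (c :: ω)) (Pi.single i 1)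
      = E.S c (σ (cs.wordProd ω) (Pi.single i 1)) := fun c ω => by
    rw [wordProd_cons, map_mul, Module.End.mul_apply, hσ]
  have hodd_of_even : ∀ k : ℕ, σ (cs.wordProd (alternatingWord i j (2 * k))) (Pi.single i 1)
        = (Chebyshev.S ℝ (2 * k)).eval t • Pi.single i 1
          + (r * (Chebyshev.S ℝ (2 * k - 1)).eval t) • Pi.single j 1 →
      σ (cs.wordProd (alternatingWord i j (2 * k + 1))) (Pi.single i 1)
        = (Chebyshev.S ℝ (2 * k)).eval t • Pi.single i 1
          + (r * (Chebyshev.S ℝ (2 * k + 1)).eval t) • Pi.single j 1 := fun k h => by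
    rw [alternatingWord_succ', if_pos (even_two_mul k), hσ_cons, h, S_apply_right]
    have hrec := Chebyshev.S_eval_add_two t (2 * k - 1)
    rw [show (2 * k - 1 + 2 : ℤ) = 2 * k + 1 by ring, sub_add_cancel] at hrec
    rw [hrec, ← hr]
    congr 2
    ring
  induction k with
  | zero => exact ⟨by simp [alternatingWord], hodd_of_even 0 (by simp [alternatingWord])⟩
  | succ k ih =>
    have heven : σ (cs.wordProd (alternatingWord i j (2 * (k + 1)))) (Pi.single i 1)
        = (Chebyshev.S ℝ (2 * (k + 1 : ℕ))).eval t • Pi.single i 1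
          + (r * (Chebyshev.S ℝ (2 * (k + 1 : ℕ) - 1)).eval t) • Pi.single j 1 := by
      rw [show 2 * (k + 1) = 2 * k + 1 + 1 by ring, alternatingWord_succ',
        if_neg (Nat.not_even_two_mul_add_one k), hσ_cons, ih.2, S_apply_left]
      push_cast
      rw [show (2 * (k + 1) : ℤ) = 2 * k + 2 by ring, show (2 * k + 2 - 1 : ℤ) = 2 * k + 1 by ring,
        Chebyshev.S_eval_add_two, ← ht]
      congr 2
      ring
    exact ⟨heven, hodd_of_even _ heven⟩

theorem exists_wordProd_alternatingWord_apply_single (hσ : ∀ i, σ (cs.simple i) = E.S i)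
    {i j : ι} (hij : i ≠ j) {n : ℕ} (hn : E.m i j = 0 ∨ n < E.m i j) :
    ∃ p q : ℝ, 0 ≤ p ∧ 0 ≤ q ∧
      σ (cs.wordProd (alternatingWord i j n)) (Pi.single i 1)
        = p • Pi.single i 1 + q • Pi.single j 1 := by
  obtain ⟨r, hr0, ht, hr⟩ := E.exists_symmetrizing_scale hij
  have hS : ∀ k : ℤ, -1 ≤ k → k ≤ n →
      0 ≤ (Chebyshev.S ℝ k).eval √(E.M i j * E.M j i) := by
    intro k hk hkn
    rcases eq_or_ne (E.m i j) 0 with hm | hm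
    · exact Chebyshev.S_eval_nonneg_of_two_le (E.two_le_sqrt_M_mul_M hij hm) hk
    · rw [E.sqrt_M_mul_M_eq hij hm]
      have := hn.resolve_left hm
      exact Chebyshev.S_eval_two_mul_cos_pi_div_nonneg (E.two_le_m_and_M_mul_M_eq hij hm).1 hk
        (by omega)
  obtain ⟨k, rfl | rfl⟩ := Nat.even_or_odd' n
  · exact ⟨_, _, hS _ (by omega) (by push_cast; omega),
      mul_nonneg hr0 (hS _ (by omega) (by push_cast; omega)),
      (E.wordProd_alternatingWord_apply_single hσ ht hr k).1⟩
  · exact ⟨_, _, hS _ (by omega) (by push_cast; omega),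
      mul_nonneg hr0 (hS _ (by omega) (by push_cast; omega)),
      (E.wordProd_alternatingWord_apply_single hσ ht hr k).2⟩

theorem apply_single_nonneg (hσ : ∀ i, σ (cs.simple i) = E.S i) {w : W} {i : ι}
    (h : ¬cs.IsRightDescent w i) : 0 ≤ σ w (Pi.single i 1) := by
  induction hℓ : cs.length w using Nat.strong_induction_on generalizing w i with
  | _ n ih =>
  rcases eq_or_ne w 1 with rfl | hw1
  · simp [Pi.single_nonneg]
  obtain ⟨j, hj⟩ := cs.exists_rightDescent_of_ne_one hw1
  have hij : i ≠ j := by rintro rfl; exact h hj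
  obtain ⟨u, n, rfl, hlen, hui, huj, hn⟩ :=
    cs.exists_alternating_factorization_of_isRightDescent h hj
  obtain ⟨p, q, hp, hq, hv⟩ := E.exists_wordProd_alternatingWord_apply_single hσ hij hn
  rw [map_mul, Module.End.mul_apply, hv, map_add, map_smul, map_smul]
  exact add_nonneg (smul_nonneg hp (ih _ (hℓ ▸ hlen) hui rfl))
    (smul_nonneg hq (ih _ (hℓ ▸ hlen) huj rfl))

theorem fireList_dotProduct (hσ : ∀ i, σ (cs.simple i) = E.S i) (s : List ι) (lam v : ι → ℝ) :
    E.fireList lam s ⬝ᵥ v = lam ⬝ᵥ σ (cs.wordProd s) v := by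
  induction s generalizing lam with
  | nil => simp [fireList]
  | cons i s ih =>
    rw [fireList, ih, fire_dotProduct, wordProd_cons, map_mul, Module.End.mul_apply, hσ]

theorem apply_nonneg_of_minReps (hσ : ∀ i, σ (cs.simple i) = E.S i) {J : Set ι} {w : W}
    (hw : w ∈ minReps cs J) {β : ι → ℝ} (hβ : 0 ≤ β) (hβJ : ∀ x ∉ J, β x = 0) :
    0 ≤ σ w β := by
  rw [← Finset.univ_sum_single β, map_sum]
  refine Finset.sum_nonneg fun x _ => ?_
  by_cases hx : x ∈ J
  · rw [← mul_one (β x), ← smul_eq_mul, Pi.single_smul', map_smul]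
    exact smul_nonneg (hβ x) (E.apply_single_nonneg hσ (hw x hx).asymm)
  · simp [hβJ x hx]

theorem dotProduct_pos_of_minReps (hσ : ∀ i, σ (cs.simple i) = E.S i) {J : Set ι} {w : W}
    (hw : w ∈ minReps cs J) {lam : ι → ℝ} (hlam : JcDominant J lam) {β : ι → ℝ} (hβ : 0 ≤ β)
    (hβ0 : β ≠ 0) (hwβ : σ w β ≤ 0) : 0 < lam ⬝ᵥ β := by
  have hlam0 : 0 ≤ lam := fun x => by
    by_cases hx : x ∈ J
    · exact (hlam.1 x hx).ge
    · exact (hlam.2 x hx).le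
  refine (dotProduct_nonneg_of_nonneg hlam0 hβ).lt_of_ne fun h0 => hβ0 ?_
  -- `β` is orthogonal to `lam`, so it is supported on `J`, where `w` keeps it nonnegative
  have hβJ : ∀ x ∉ J, β x = 0 := fun x hx =>
    (mul_eq_zero.1 ((Finset.sum_eq_zero_iff_of_nonneg fun y _ => mul_nonneg (hlam0 y) (hβ y)).1
      h0.symm x (Finset.mem_univ x))).resolve_left (hlam.2 x hx).ne'
  have hwβ0 : σ w β = 0 := le_antisymm hwβ (E.apply_nonneg_of_minReps hσ hw hβ hβJ)
  rw [← σ.map_inv_apply_map_apply w β, hwβ0, map_zero]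

theorem root_nonneg_and_dotProduct_pos (hσ : ∀ i, σ (cs.simple i) = E.S i) {J : Set ι}
    {lam : ι → ℝ} (hlam : JcDominant J lam) {ω₁ ω₂ : List ι} {i : ι}
    (hred : cs.IsReduced (ω₁ ++ i :: ω₂))
    (hmin : cs.wordProd (ω₁ ++ i :: ω₂).reverse ∈ minReps cs J) :
    0 ≤ σ (cs.wordProd ω₁) (Pi.single i 1) ∧
      0 < lam ⬝ᵥ σ (cs.wordProd ω₁) (Pi.single i 1) := by
  have hu : ¬cs.IsRightDescent (cs.wordProd ω₁) i := by
    have h := (List.append_cons ω₁ i ω₂ ▸ hred).take (ω₁ ++ [i]).length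
    exact cs.not_isRightDescent_wordProd_of_isReduced (by rwa [List.take_left] at h)
  have hv : ¬cs.IsRightDescent (cs.wordProd ω₂.reverse) i :=
    cs.not_isRightDescent_wordProd_of_isReduced (by simpa using (hred.drop ω₁.length).reverse)
  have hβ := E.apply_single_nonneg hσ hu
  refine ⟨hβ, E.dotProduct_pos_of_minReps hσ hmin hlam hβ ?_ ?_⟩
  · intro h0
    have h := σ.map_inv_apply_map_apply (cs.wordProd ω₁) (Pi.single i 1)
    rw [h0, map_zero] at h
    simpa using congr_fun h i
  · have hwu : cs.wordProd (ω₁ ++ i :: ω₂).reverse * cs.wordProd ω₁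
        = cs.wordProd ω₂.reverse * cs.simple i := by
      simp [wordProd_append, wordProd_cons, mul_assoc]
    rw [← Module.End.mul_apply, ← map_mul, hwu, map_mul, Module.End.mul_apply, hσ,
      S_apply_single_self, map_neg]
    exact neg_nonpos.2 (E.apply_single_nonneg hσ hv)

end EGCM

theorem egcm_minRep_reduced_word_legal_general {ι : Type*} [Fintype ι] [DecidableEq ι]
    (E : EGCM ι) {W : Type*} [Group W] (cs : CoxeterSystem E.cox W)
    (σ : W →* Module.End ℝ (ι → ℝ)) (hσ : ∀ i, σ (cs.simple i) = E.S i)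
    (J : Set ι)
    (lam : ι → ℝ) (hlam : EGCM.JcDominant J lam)
    (l : List ι) (hred : cs.IsReduced l.reverse)
    (hmem : cs.wordProd l.reverse ∈ minReps cs J) :
    E.Legal lam l ∧
      ∀ q : Fin l.length,
        (∀ x, 0 ≤ σ (cs.wordProd (l.take (q : ℕ))) (Pi.single (l.get q) 1) x) ∧
        0 < ∑ x, lam x * σ (cs.wordProd (l.take (q : ℕ))) (Pi.single (l.get q) 1) x := by
  have hl : cs.IsReduced l := (cs.isReduced_reverse_iff l).1 hred
  have hroot : ∀ q : Fin l.length,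
      0 ≤ σ (cs.wordProd (l.take q)) (Pi.single (l.get q) 1) ∧
        0 < lam ⬝ᵥ σ (cs.wordProd (l.take q)) (Pi.single (l.get q) 1) := fun q => by
    have hsplit : l = l.take q ++ l.get q :: l.drop (q + 1) := by
      rw [List.get_eq_getElem, ← List.drop_eq_getElem_cons q.isLt, List.take_append_drop]
    rw [hsplit] at hl hmem
    exact E.root_nonneg_and_dotProduct_pos hσ hlam hl hmem
  refine ⟨E.legal_of_forall_fireList_take_pos lam l fun q => ?_, hroot⟩
  simpa [← E.fireList_dotProduct hσ, dotProduct_single] using (hroot q).2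

/-- **Proposition 3.2.** If `W_J` is finite, `lam` is `Jᶜ`-dominant, and
`s_{i_p} ⋯ s_{i_2} s_{i_1}` is a reduced expression for an element of `W^J`, then
`(γ_{i_1}, …, γ_{i_p})` is a legal firing sequence from `lam`; equivalently each root
`β_q = s_{i_1} ⋯ s_{i_{q-1}}.α_{i_q}` is positive and pairs positively with `lam`. -/
theorem egcm_minRep_reduced_word_legal {ι : Type*} [Fintype ι] [DecidableEq ι]
    (E : EGCM ι) {W : Type*} [Group W] (cs : CoxeterSystem E.cox W)
    (σ : W →* Module.End ℝ (ι → ℝ)) (hσ : ∀ i, σ (cs.simple i) = E.S i)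
    (J : Set ι) (hfin : Set.Finite (parabolic cs J : Set W))
    (lam : ι → ℝ) (hlam : EGCM.JcDominant J lam)
    (l : List ι) (hred : cs.IsReduced l.reverse)
    (hmem : cs.wordProd l.reverse ∈ minReps cs J) :
    E.Legal lam l ∧
      ∀ q : Fin l.length,
        (∀ x, 0 ≤ σ (cs.wordProd (l.take (q : ℕ))) (Pi.single (l.get q) 1) x) ∧
        0 < ∑ x, lam x * σ (cs.wordProd (l.take (q : ℕ))) (Pi.single (l.get q) 1) x :=
  egcm_minRep_reduced_word_legal_general E cs σ hσ J lam hlam l hred hmem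
end
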